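/- arXiv:2509.14588 — 3 statements merged into one kernel-verified Lean document; each statement's English description precedes it below -/
import Mathlib

section
/- Let (P1, P2) ∈ Π(s1, t1) × Π(s2, t2) be a pair of shortest paths, and let v, w be vertices such that v precedes w on both P1 and P2. Then every internal vertex of the subpath P1[v, w] that lies on P2 is contained in the subpath P2[v, w]. -/
/-!
Since there are no cycles of nonpositive weight, every closed walk with at least one edge has
positive weight (it splits into cycles), and every walk can be shortened to a path of no larger
weight. Hence a subpath `P[x, y]` of a shortest path is no heavier than any walk from `x` to `y`,
and any two shortest paths through `x` and then `y` have subpaths of equal weight between them.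
Now let `u` be internal to `P1[v, w]` and lie on `P2`. If `u` preceded `v` on `P2`, comparing
the weights of `P1[v, w]`, `P2[v, w]`, `P1[u, w]` and `P2[u, w]` would give the closed walk
`P1[v, u] · P2[u, v]` weight zero; symmetrically, if `w` preceded `u` on `P2`, the closed walk
`P1[u, w] · P2[w, u]` would have weight zero.
-/

open scoped BigOperators

namespace DSP

variable {V : Type*} [Fintype V] [DecidableEq V]

/-- A path: a nonempty list of distinct vertices in which each consecutive
pair is joined by a directed edge. -/
def IsPath (E : V → V → Prop) (p : List V) : Prop :=
  p ≠ [] ∧ p.Nodup ∧ p.Chain' E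

/-- A path from `x` to `y`. -/
def IsPathFrom (E : V → V → Prop) (p : List V) (x y : V) : Prop :=
  IsPath E p ∧ p.head? = some x ∧ p.getLast? = some y

/-- The (ordered) list of edges of a path. -/
def pathEdges (p : List V) : List (V × V) := p.zip p.tail

/-- The weight of a path: the sum of its edge weights. -/
def pathWeight (ℓ : V → V → ℝ) (p : List V) : ℝ :=
  ((pathEdges p).map fun e => ℓ e.1 e.2).sum

/-- `dist x y` : the minimum weight of a path from `x` to `y`
(`⊤` if there is no such path). -/
noncomputable def dist (E : V → V → Prop) (ℓ : V → V → ℝ) (x y : V) : EReal :=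
  sInf {w : EReal | ∃ p : List V, IsPathFrom E p x y ∧ (pathWeight ℓ p : EReal) = w}

/-- A shortest path from `x` to `y` : a path from `x` to `y` whose weight
equals `dist x y`.  `Π(x, y)` is the set of all such paths. -/
def IsShortestPath (E : V → V → Prop) (ℓ : V → V → ℝ) (p : List V) (x y : V) : Prop :=
  IsPathFrom E p x y ∧ (pathWeight ℓ p : EReal) = dist E ℓ x y

/-- A directed cycle: a closed walk with at least one edge whose internal
vertices are pairwise distinct. -/
def IsCycle (E : V → V → Prop) (p : List V) : Prop :=
  2 ≤ p.length ∧ p.Chain' E ∧ p.head? = p.getLast? ∧ p.tail.Nodup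

/-- `G` contains no directed cycle of negative or zero total weight. -/
def NoNonposCycle (E : V → V → Prop) (ℓ : V → V → ℝ) : Prop :=
  ∀ p : List V, IsCycle E p → 0 < pathWeight ℓ p

/-- `G` is a DAG: it contains no directed cycle. -/
def Acyclic (E : V → V → Prop) : Prop :=
  ∀ p : List V, ¬ IsCycle E p

/-- `x` precedes `y` on the path `p` (`x = y` allowed). -/
def Precedes (p : List V) (x y : V) : Prop :=
  x ∈ p ∧ y ∈ p ∧ p.idxOf x ≤ p.idxOf y

/-- `subpath p x y` : the subpath `p[x, y]` of `p` from `x` to `y`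
(for `x` preceding `y` on `p`). -/
def subpath (p : List V) (x y : V) : List V :=
  (p.take (p.idxOf y + 1)).drop (p.idxOf x)

/-- Concatenation `p · q` of two paths (the last vertex of `p` coinciding
with the first vertex of `q`). -/
def pathConcat (p q : List V) : List V := p ++ q.tail

/-- A vertex is internal to a path if it lies on it and is not an endpoint. -/
def Internal (p : List V) (v : V) : Prop :=
  v ∈ p ∧ p.head? ≠ some v ∧ p.getLast? ≠ some v

/-- Paths `p1` from `x1` to `y1` and `p2` from `x2` to `y2` are internally
vertex-disjoint: they share no vertices except possibly those in
`{x1, y1} ∩ {x2, y2}`. -/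
def InternallyDisjoint (p1 : List V) (x1 y1 : V) (p2 : List V) (x2 y2 : V) : Prop :=
  ∀ u, u ∈ p1 → u ∈ p2 → u ∈ ({x1, y1} ∩ {x2, y2} : Set V)

/-- `(a, b)` is a twin-crossing pair for paths `p1`, `p2`. -/
def TwinCrossingPair (p1 p2 : List V) (a b : V) : Prop :=
  a ≠ b ∧ Precedes p1 a b ∧ Precedes p2 a b ∧ subpath p1 a b ≠ subpath p2 a b

/-- The swap operation `φ_{a,b}(P1, P2)`. -/
def swap (p1 : List V) (x1 y1 : V) (p2 : List V) (x2 y2 : V) (a b : V) :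
    List V × List V :=
  (pathConcat (pathConcat (subpath p1 x1 a) (subpath p2 a b)) (subpath p1 b y1),
   pathConcat (pathConcat (subpath p2 x2 a) (subpath p1 a b)) (subpath p2 b y2))

/-- The graph with vertex `u` deleted. -/
def deleteVertex (E : V → V → Prop) (u : V) : V → V → Prop :=
  fun a b => E a b ∧ a ≠ u ∧ b ≠ u

/-- `u` is distance-critical for `(x, y)` : deleting `u` strictly increases
the distance from `x` to `y`. -/
def DistCritical (E : V → V → Prop) (ℓ : V → V → ℝ) (x y u : V) : Prop :=
  dist E ℓ x y < dist (deleteVertex E u) ℓ x y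

/-- `Δ(x, y)` : the distance-critical vertices for `(x, y)` together with the
endpoints `x`, `y`. -/
def Delta (E : V → V → Prop) (ℓ : V → V → ℝ) (x y : V) : Set V :=
  {u | DistCritical E ℓ x y u} ∪ {x, y}

/-- `δ(x, y) = |Δ(x, y)|`. -/
noncomputable def deltaCard (E : V → V → Prop) (ℓ : V → V → ℝ) (x y : V) : ℕ :=
  (Delta E ℓ x y).ncard

/-- `(a, b)` is a concordant pair for paths `p1` (from `x1` to `y1`) and
`p2` (from `x2` to `y2`). -/
def ConcordantPair (p1 : List V) (x1 y1 : V) (p2 : List V) (x2 y2 : V) (a b : V) : Prop :=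
  a ∉ ({x1, y1} ∩ {x2, y2} : Set V) ∧ b ∉ ({x1, y1} ∩ {x2, y2} : Set V) ∧
  Precedes p1 a b ∧ Precedes p2 a b ∧
  InternallyDisjoint (subpath p1 x1 a) x1 a (subpath p2 x2 a) x2 a ∧
  InternallyDisjoint (subpath p1 b y1) b y1 (subpath p2 b y2) b y2

/-- `𝒞(P1, P2)` : the set of concordant pairs for `(P1, P2)`. -/
def concordantSet (p1 : List V) (x1 y1 : V) (p2 : List V) (x2 y2 : V) : Set (V × V) :=
  {c | ConcordantPair p1 x1 y1 p2 x2 y2 c.1 c.2}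

/-- The interaction complexity `γ(P1, P2) = Σ_{(v,w) ∈ 𝒞(P1,P2)} δ(v, w)`. -/
noncomputable def gamma (E : V → V → Prop) (ℓ : V → V → ℝ)
    (p1 : List V) (x1 y1 : V) (p2 : List V) (x2 y2 : V) : ℕ :=
  ∑ᶠ c ∈ concordantSet p1 x1 y1 p2 x2 y2, deltaCard E ℓ c.1 c.2

/-- `E(x, y)` : the set of edges lying on at least one shortest path
from `x` to `y`. -/
def shortestEdges (E : V → V → Prop) (ℓ : V → V → ℝ) (x y : V) : Set (V × V) :=
  {e | ∃ p : List V, IsShortestPath E ℓ p x y ∧ e ∈ pathEdges p}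

section Poly

variable (F : Type*) [Field F] [CharP F 2]

/-- The monomial `f(P) = ∏_{e ∈ E(P)} z_e` of a path. -/
noncomputable def pathMon (p : List V) : MvPolynomial (V × V) F :=
  ((pathEdges p).map fun e => MvPolynomial.X e).prod

/-- The enumerating polynomial of a collection of paths. -/
noncomputable def enumPoly (S : Set (List V)) : MvPolynomial (V × V) F :=
  ∑ᶠ p ∈ S, pathMon F p

/-- The enumerating polynomial of a collection of pairs of paths. -/
noncomputable def enumPoly2 (S : Set (List V × List V)) : MvPolynomial (V × V) F :=
  ∑ᶠ q ∈ S, pathMon F q.1 * pathMon F q.2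

variable (E : V → V → Prop) (ℓ : V → V → ℝ)

/-- `F(x, y)` : the enumerating polynomial of `Π(x, y)`. -/
noncomputable def Fpoly (x y : V) : MvPolynomial (V × V) F :=
  enumPoly F {p : List V | IsShortestPath E ℓ p x y}

end Poly

variable (E : V → V → Prop) (ℓ : V → V → ℝ)

/-- The collection of internally vertex-disjoint pairs
`(P1, P2) ∈ Π(x1, y1) × Π(x2, y2)`. -/
def disjPairs (x1 y1 x2 y2 : V) : Set (List V × List V) :=
  {q | IsShortestPath E ℓ q.1 x1 y1 ∧ IsShortestPath E ℓ q.2 x2 y2 ∧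
       InternallyDisjoint q.1 x1 y1 q.2 x2 y2}

/-- Pairs `(P1, P2) ∈ Π(x1, y1) × Π(x2, y2)` such that `v ∈ V(P1) ∩ V(P2)`
and the prefix `P1[x1, v]` and the suffix `P2[v, y2]` are internally
vertex-disjoint (defining `H_v`). -/
def HvPairs (v x1 y1 x2 y2 : V) : Set (List V × List V) :=
  {q | IsShortestPath E ℓ q.1 x1 y1 ∧ IsShortestPath E ℓ q.2 x2 y2 ∧
       v ∈ q.1 ∧ v ∈ q.2 ∧
       InternallyDisjoint (subpath q.1 x1 v) x1 v (subpath q.2 v y2) v y2}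

/-- Pairs `(P1, P2) ∈ Π(x1, y1) × Π(x2, y2)` such that
`(a, v) ∈ E(P1) ∩ E(P2)` and the prefix `P1[x1, a]` and the suffix
`P2[v, y2]` are internally vertex-disjoint (defining `H_{av}`). -/
def HavPairs (a v x1 y1 x2 y2 : V) : Set (List V × List V) :=
  {q | IsShortestPath E ℓ q.1 x1 y1 ∧ IsShortestPath E ℓ q.2 x2 y2 ∧
       (a, v) ∈ pathEdges q.1 ∧ (a, v) ∈ pathEdges q.2 ∧
       InternallyDisjoint (subpath q.1 x1 a) x1 a (subpath q.2 v y2) v y2}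

/-- Pairs `(P1, P2) ∈ Π(x1, y1) × Π(x2, y2)` such that `v ∈ V(P1) ∩ V(P2)`
and the prefix `P1[x1, v]` is internally vertex-disjoint from both
`P2[x2, v]` and `P2[v, y2]` (defining `D_v`). -/
def DvPairs (v x1 y1 x2 y2 : V) : Set (List V × List V) :=
  {q | IsShortestPath E ℓ q.1 x1 y1 ∧ IsShortestPath E ℓ q.2 x2 y2 ∧
       v ∈ q.1 ∧ v ∈ q.2 ∧
       InternallyDisjoint (subpath q.1 x1 v) x1 v (subpath q.2 x2 v) x2 v ∧
       InternallyDisjoint (subpath q.1 x1 v) x1 v (subpath q.2 v y2) v y2}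

/-- Pairs `(P1, P2) ∈ Π(x1, y1) × Π(x2, y2)` with interaction complexity
`γ(P1, P2) ≤ k` (defining `F_{disj,k}`). -/
def disjkPairs (k : ℤ) (x1 y1 x2 y2 : V) : Set (List V × List V) :=
  {q | IsShortestPath E ℓ q.1 x1 y1 ∧ IsShortestPath E ℓ q.2 x2 y2 ∧
       (gamma E ℓ q.1 x1 y1 q.2 x2 y2 : ℤ) ≤ k}

/-- Pairs `(P1, P2) ∈ Π(x1, y1) × Π(x2, y2)` with `γ(P1, P2) ≤ k` such that
`(v, w) ∈ 𝒞(P1, P2)` and `(v, w)` is the concordant pair appearing first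
along `P1` (defining `D_{v,w,k}`). -/
def DvwkPairs (k : ℤ) (v w x1 y1 x2 y2 : V) : Set (List V × List V) :=
  {q | IsShortestPath E ℓ q.1 x1 y1 ∧ IsShortestPath E ℓ q.2 x2 y2 ∧
       (gamma E ℓ q.1 x1 y1 q.2 x2 y2 : ℤ) ≤ k ∧
       (v, w) ∈ concordantSet q.1 x1 y1 q.2 x2 y2 ∧
       ∀ c ∈ concordantSet q.1 x1 y1 q.2 x2 y2, q.1.idxOf v ≤ q.1.idxOf c.1}

/-- Pairs `(P1, P2) ∈ Π(x1, y1) × Π(x2, y2)` such that `v` and `w` lie on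
both paths with `v` preceding `w` on both, the subpaths `P1[x1, v]` and
`P2[w, y2]` are internally vertex-disjoint, and
`γ(P1[v, y1], P2[x2, w]) ≤ k` (defining `H_{v,w,k}`). -/
def HvwkPairs (k : ℤ) (v w x1 y1 x2 y2 : V) : Set (List V × List V) :=
  {q | IsShortestPath E ℓ q.1 x1 y1 ∧ IsShortestPath E ℓ q.2 x2 y2 ∧
       Precedes q.1 v w ∧ Precedes q.2 v w ∧
       InternallyDisjoint (subpath q.1 x1 v) x1 v (subpath q.2 w y2) w y2 ∧
       (gamma E ℓ (subpath q.1 v y1) v y1 (subpath q.2 x2 w) x2 w : ℤ) ≤ k}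

/-- As `HvwkPairs`, additionally requiring the edge `(a, v)` on both paths
(disjointness imposed on `P1[x1, a]` and `P2[w, y2]`), defining `H_{av,w,k}`. -/
def HavwkPairs (k : ℤ) (a v w x1 y1 x2 y2 : V) : Set (List V × List V) :=
  {q | IsShortestPath E ℓ q.1 x1 y1 ∧ IsShortestPath E ℓ q.2 x2 y2 ∧
       Precedes q.1 v w ∧ Precedes q.2 v w ∧
       (a, v) ∈ pathEdges q.1 ∧ (a, v) ∈ pathEdges q.2 ∧
       InternallyDisjoint (subpath q.1 x1 a) x1 a (subpath q.2 w y2) w y2 ∧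
       (gamma E ℓ (subpath q.1 v y1) v y1 (subpath q.2 x2 w) x2 w : ℤ) ≤ k}

/-- As `HvwkPairs`, additionally requiring the edge `(w, b)` on both paths
(disjointness imposed on `P1[x1, v]` and `P2[b, y2]`), defining `H_{v,wb,k}`. -/
def HvwbkPairs (k : ℤ) (v w b x1 y1 x2 y2 : V) : Set (List V × List V) :=
  {q | IsShortestPath E ℓ q.1 x1 y1 ∧ IsShortestPath E ℓ q.2 x2 y2 ∧
       Precedes q.1 v w ∧ Precedes q.2 v w ∧
       (w, b) ∈ pathEdges q.1 ∧ (w, b) ∈ pathEdges q.2 ∧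
       InternallyDisjoint (subpath q.1 x1 v) x1 v (subpath q.2 b y2) b y2 ∧
       (gamma E ℓ (subpath q.1 v y1) v y1 (subpath q.2 x2 w) x2 w : ℤ) ≤ k}

/-- As `HvwkPairs`, additionally requiring both edges `(a, v)` and `(w, b)`
on both paths (disjointness imposed on `P1[x1, a]` and `P2[b, y2]`),
defining `H_{av,wb,k}`. -/
def HavwbkPairs (k : ℤ) (a v w b x1 y1 x2 y2 : V) : Set (List V × List V) :=
  {q | IsShortestPath E ℓ q.1 x1 y1 ∧ IsShortestPath E ℓ q.2 x2 y2 ∧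
       Precedes q.1 v w ∧ Precedes q.2 v w ∧
       (a, v) ∈ pathEdges q.1 ∧ (a, v) ∈ pathEdges q.2 ∧
       (w, b) ∈ pathEdges q.1 ∧ (w, b) ∈ pathEdges q.2 ∧
       InternallyDisjoint (subpath q.1 x1 a) x1 a (subpath q.2 b y2) b y2 ∧
       (gamma E ℓ (subpath q.1 v y1) v y1 (subpath q.2 x2 w) x2 w : ℤ) ≤ k}

section Walks

omit [Fintype V] [DecidableEq V]

variable {E ℓ}

def IsWalkFrom (E : V → V → Prop) (p : List V) (x y : V) : Prop :=
  p.IsChain E ∧ p.head? = some x ∧ p.getLast? = some y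

theorem IsWalkFrom.two_le_length {p : List V} {x y : V} (h : IsWalkFrom E p x y)
    (hxy : x ≠ y) : 2 ≤ p.length := by
  obtain ⟨-, hx, hy⟩ := h
  match p, hx, hy with
  | [_], hx, hy => simp_all
  | _ :: _ :: _, _, _ => simp

@[simp]
theorem pathWeight_singleton (x : V) : pathWeight ℓ [x] = 0 := rfl

@[simp]
theorem pathWeight_cons_cons (x y : V) (l : List V) :
    pathWeight ℓ (x :: y :: l) = ℓ x y + pathWeight ℓ (y :: l) := by
  simp [pathWeight, pathEdges]

theorem pathWeight_append_cons (l₁ l₂ : List V) (a : V) :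
    pathWeight ℓ (l₁ ++ a :: l₂) = pathWeight ℓ (l₁ ++ [a]) + pathWeight ℓ (a :: l₂) := by
  induction l₁ with
  | nil => simp
  | cons x l₁ ih =>
    cases l₁ with
    | nil => simp
    | cons y l₁ => simp only [List.cons_append, pathWeight_cons_cons] at ih ⊢; linarith

theorem pathWeight_pathConcat {p q : List V} {m : V} (hp : p.getLast? = some m)
    (hq : q.head? = some m) : pathWeight ℓ (pathConcat p q) = pathWeight ℓ p + pathWeight ℓ q := by
  obtain ⟨p, rfl⟩ := List.getLast?_eq_some_iff.1 hp
  obtain ⟨q, rfl⟩ := List.head?_eq_some_iff.1 hq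
  rw [pathConcat, List.tail_cons, List.append_assoc, List.singleton_append,
    pathWeight_append_cons]

theorem IsWalkFrom.pathConcat {p q : List V} {x y z : V} (hp : IsWalkFrom E p x y)
    (hq : IsWalkFrom E q y z) : IsWalkFrom E (pathConcat p q) x z := by
  obtain ⟨hpc, hpx, hpy⟩ := hp
  obtain ⟨hqc, hqy, hqz⟩ := hq
  obtain ⟨p, rfl⟩ := List.getLast?_eq_some_iff.1 hpy
  obtain ⟨q, rfl⟩ := List.head?_eq_some_iff.1 hqy
  refine ⟨?_, ?_, ?_⟩
  · simpa [DSP.pathConcat] using List.isChain_split.2 ⟨hpc, hqc⟩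
  · simpa [DSP.pathConcat] using hpx
  · simpa [DSP.pathConcat] using hqz

theorem exists_eq_append_cons_append_cons_of_not_nodup {l : List V} (h : ¬ l.Nodup) :
    ∃ l₁ a m l₂, l = l₁ ++ a :: m ++ a :: l₂ := by
  induction l with
  | nil => simp at h
  | cons x l ih =>
    by_cases hx : x ∈ l
    · obtain ⟨m, l₂, rfl⟩ := List.append_of_mem hx
      exact ⟨[], x, m, l₂, by simp⟩
    · obtain ⟨l₁, a, m, l₂, rfl⟩ := ih (by simpa [hx] using h)
      exact ⟨x :: l₁, a, m, l₂, by simp⟩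

section Loop

variable {l₁ m l₂ : List V} {a : V}

theorem pathWeight_eq_add_loop :
    pathWeight ℓ (l₁ ++ a :: m ++ a :: l₂)
      = pathWeight ℓ (l₁ ++ a :: l₂) + pathWeight ℓ (a :: m ++ [a]) := by
  rw [pathWeight_append_cons (l₁ ++ a :: m), List.append_assoc, List.cons_append,
    pathWeight_append_cons l₁ (m ++ [a]), pathWeight_append_cons l₁ l₂]
  ring

theorem IsWalkFrom.excise_loop {x y : V} (h : IsWalkFrom E (l₁ ++ a :: m ++ a :: l₂) x y) :
    IsWalkFrom E (l₁ ++ a :: l₂) x y ∧ IsWalkFrom E (a :: m ++ [a]) a a := by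
  obtain ⟨hc, hx, hy⟩ := h
  rw [List.append_assoc, List.cons_append] at hc
  obtain ⟨hl₁, ham⟩ := List.isChain_split.1 hc
  obtain ⟨hloop, hl₂⟩ := List.isChain_cons_split.1 ham
  refine ⟨⟨List.isChain_split.2 ⟨hl₁, hl₂⟩, ?_, ?_⟩, ⟨hloop, rfl, by simp [List.getLast?_cons]⟩⟩
  · cases l₁ <;> simpa using hx
  · simpa [List.getLast?_cons] using hy

end Loop

variable (hG : NoNonposCycle E ℓ)
include hG

theorem IsWalkFrom.pathWeight_pos {p : List V} {x : V} (h : IsWalkFrom E p x x)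
    (hp : 2 ≤ p.length) : 0 < pathWeight ℓ p := by
  obtain ⟨t, rfl⟩ := List.head?_eq_some_iff.1 h.2.1
  by_cases ht : t.Nodup
  · exact hG _ ⟨hp, h.1, h.2.1.trans h.2.2.symm, ht⟩
  obtain ⟨l₁, a, m, l₂, rfl⟩ := exists_eq_append_cons_append_cons_of_not_nodup ht
  obtain ⟨hshort, hloop⟩ := IsWalkFrom.excise_loop (l₁ := x :: l₁) h
  have hshort_pos := hshort.pathWeight_pos (by simp only [List.cons_append, List.length_cons, List.length_append]; omega)
  have hloop_pos := hloop.pathWeight_pos (by simp)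
  rw [← List.cons_append, ← List.cons_append, pathWeight_eq_add_loop]
  linarith
termination_by p.length

theorem IsWalkFrom.exists_isPathFrom {p : List V} {x y : V} (h : IsWalkFrom E p x y) :
    ∃ q, IsPathFrom E q x y ∧ pathWeight ℓ q ≤ pathWeight ℓ p := by
  by_cases hp : p.Nodup
  · exact ⟨p, ⟨⟨(by rintro rfl; cases h.2.1), hp, h.1⟩, h.2⟩, le_rfl⟩
  obtain ⟨l₁, a, m, l₂, rfl⟩ := exists_eq_append_cons_append_cons_of_not_nodup hp
  obtain ⟨hshort, hloop⟩ := h.excise_loop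
  obtain ⟨q, hq, hle⟩ := hshort.exists_isPathFrom
  have hloop_pos := hloop.pathWeight_pos hG (by simp)
  exact ⟨q, hq, by rw [pathWeight_eq_add_loop]; linarith⟩
termination_by p.length

theorem IsShortestPath.pathWeight_le {P q : List V} {s t : V} (hP : IsShortestPath E ℓ P s t)
    (hq : IsWalkFrom E q s t) : pathWeight ℓ P ≤ pathWeight ℓ q := by
  obtain ⟨r, hr, hle⟩ := hq.exists_isPathFrom hG
  have hPr : (pathWeight ℓ P : EReal) ≤ pathWeight ℓ r := hP.2 ▸ sInf_le ⟨r, hr, rfl⟩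
  exact (EReal.coe_le_coe_iff.1 hPr).trans hle

theorem IsWalkFrom.pathWeight_add_pos {p q : List V} {x y : V} (hp : IsWalkFrom E p x y)
    (hq : IsWalkFrom E q y x) (hxy : x ≠ y) : 0 < pathWeight ℓ p + pathWeight ℓ q := by
  rw [← pathWeight_pathConcat hp.2.2 hq.2.1]
  refine (hp.pathConcat hq).pathWeight_pos hG ((hp.two_le_length hxy).trans ?_)
  simp [DSP.pathConcat]

end Walks

section Subpaths

omit [Fintype V]

variable {E ℓ} {p : List V} {x y m u : V}

theorem head?_subpath (hx : x ∈ p) (hxy : p.idxOf x ≤ p.idxOf y) :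
    (subpath p x y).head? = some x := by
  rw [subpath, List.head?_drop, List.getElem?_take_of_lt (by omega), List.getElem?_idxOf hx]

theorem getLast?_subpath (hy : y ∈ p) (hxy : p.idxOf x ≤ p.idxOf y) :
    (subpath p x y).getLast? = some y := by
  have hy' := List.idxOf_lt_length_iff.2 hy
  rw [subpath, List.getLast?_drop, List.getLast?_take, List.length_take, if_neg (by omega),
    if_neg (by omega), Nat.add_sub_cancel, List.getElem?_idxOf hy, Option.some_or]

theorem Precedes.isWalkFrom_subpath (hp : p.IsChain E) (h : Precedes p x y) :
    IsWalkFrom E (subpath p x y) x y :=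
  ⟨(hp.take _).drop _, head?_subpath h.1 h.2.2, getLast?_subpath h.2.1 h.2.2⟩

theorem subpath_eq_pathConcat (hxm : p.idxOf x ≤ p.idxOf m) (hmy : p.idxOf m ≤ p.idxOf y) :
    subpath p x y = pathConcat (subpath p x m) (subpath p m y) := by
  have htake : p.take (p.idxOf m + 1) = (p.take (p.idxOf y + 1)).take (p.idxOf m + 1) := by
    rw [List.take_take, min_eq_left (by omega)]
  have hsplit := List.drop_take_append_drop (p.take (p.idxOf y + 1)) (p.idxOf x)
    (p.idxOf m + 1 - p.idxOf x)
  rw [Nat.add_sub_cancel' (by omega)] at hsplit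
  rw [subpath, subpath, subpath, pathConcat, List.tail_drop, htake,
    List.drop_take (i := p.idxOf x) (j := p.idxOf m + 1), hsplit]

theorem pathWeight_subpath (hxm : Precedes p x m) (hmy : Precedes p m y) :
    pathWeight ℓ (subpath p x y) = pathWeight ℓ (subpath p x m) + pathWeight ℓ (subpath p m y) := by
  rw [subpath_eq_pathConcat hxm.2.2 hmy.2.2,
    pathWeight_pathConcat (getLast?_subpath hxm.2.1 hxm.2.2) (head?_subpath hmy.1 hmy.2.2)]

theorem mem_subpath_iff (hp : p.Nodup) (hy : y ∈ p) :
    u ∈ subpath p x y ↔ Precedes p x u ∧ Precedes p u y := by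
  have hy' := List.idxOf_lt_length_iff.2 hy
  simp only [subpath, List.mem_drop_iff_getElem, List.getElem_take, List.length_take]
  constructor
  · rintro ⟨j, hj, rfl⟩
    have hx : x ∈ p := List.idxOf_lt_length_iff.1 (by omega)
    simp only [Precedes, hp.idxOf_getElem]
    exact ⟨⟨hx, List.getElem_mem _, by omega⟩, ⟨List.getElem_mem _, hy, by omega⟩⟩
  · rintro ⟨⟨-, hu, hxu⟩, -, -, huy⟩
    refine ⟨p.idxOf u - p.idxOf x, by omega, ?_⟩
    simp only [Nat.add_sub_cancel' hxu, List.getElem_idxOf]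

theorem Precedes.trans {z : V} (h₁ : Precedes p x y) (h₂ : Precedes p y z) : Precedes p x z :=
  ⟨h₁.1, h₂.2.1, h₁.2.2.trans h₂.2.2⟩

theorem Precedes.total (hx : x ∈ p) (hy : y ∈ p) : Precedes p x y ∨ Precedes p y x :=
  (le_total (p.idxOf x) (p.idxOf y)).imp (⟨hx, hy, ·⟩) (⟨hy, hx, ·⟩)

section PathFrom

variable {s t : V} (hp : IsPathFrom E p s t)
include hp

theorem IsPathFrom.idxOf_eq_zero : p.idxOf s = 0 := by
  obtain ⟨p, rfl⟩ := List.head?_eq_some_iff.1 hp.2.1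
  exact List.idxOf_cons_self

theorem IsPathFrom.idxOf_eq_length_sub_one : p.idxOf t = p.length - 1 := by
  have ht := hp.2.2
  rw [List.getLast?_eq_getElem?, List.getElem?_eq_some_iff] at ht
  obtain ⟨hlt, rfl⟩ := ht
  exact hp.1.2.1.idxOf_getElem _ _

theorem IsPathFrom.precedes_of_mem (hx : x ∈ p) : Precedes p s x ∧ Precedes p x t := by
  have hs := List.mem_of_head? hp.2.1
  have ht := List.mem_of_getLast? hp.2.2
  have hx' := List.idxOf_lt_length_iff.2 hx
  rw [Precedes, Precedes, hp.idxOf_eq_zero, hp.idxOf_eq_length_sub_one]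
  exact ⟨⟨hs, hx, Nat.zero_le _⟩, ⟨hx, ht, by omega⟩⟩

theorem IsPathFrom.subpath_eq_self : subpath p s t = p := by
  have hne : p.length ≠ 0 := by simpa using hp.1.1
  rw [subpath, hp.idxOf_eq_zero, hp.idxOf_eq_length_sub_one, Nat.sub_add_cancel (by omega),
    List.take_length, List.drop_zero]

end PathFrom

end Subpaths

section ShortestPaths

omit [Fintype V]

variable {E ℓ} (hG : NoNonposCycle E ℓ) {P Q q : List V} {s t s' t' x y : V}
include hG

theorem IsShortestPath.pathWeight_subpath_le (hP : IsShortestPath E ℓ P s t)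
    (hxy : Precedes P x y) (hq : IsWalkFrom E q x y) :
    pathWeight ℓ (subpath P x y) ≤ pathWeight ℓ q := by
  have hchain := hP.1.1.2.2
  obtain ⟨hsx, hxt⟩ := hP.1.precedes_of_mem hxy.1
  have hyt := (hP.1.precedes_of_mem hxy.2.1).2
  have hprefix := hsx.isWalkFrom_subpath hchain
  have hsuffix := hyt.isWalkFrom_subpath hchain
  have hP_split : pathWeight ℓ P = pathWeight ℓ (subpath P s x)
      + pathWeight ℓ (subpath P x y) + pathWeight ℓ (subpath P y t) := by
    conv_lhs => rw [← hP.1.subpath_eq_self]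
    rw [pathWeight_subpath hsx hxt, pathWeight_subpath hxy hyt, add_assoc]
  have hle := hP.pathWeight_le hG ((hprefix.pathConcat hq).pathConcat hsuffix)
  rw [pathWeight_pathConcat (hprefix.pathConcat hq).2.2 hsuffix.2.1,
    pathWeight_pathConcat hprefix.2.2 hq.2.1] at hle
  linarith

theorem IsShortestPath.pathWeight_subpath_eq (hP : IsShortestPath E ℓ P s t)
    (hQ : IsShortestPath E ℓ Q s' t') (hPxy : Precedes P x y) (hQxy : Precedes Q x y) :
    pathWeight ℓ (subpath P x y) = pathWeight ℓ (subpath Q x y) :=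
  le_antisymm (hP.pathWeight_subpath_le hG hPxy (hQxy.isWalkFrom_subpath hQ.1.1.2.2))
    (hQ.pathWeight_subpath_le hG hQxy (hPxy.isWalkFrom_subpath hP.1.1.2.2))

variable {u v w : V} (hP : IsShortestPath E ℓ P s t) (hQ : IsShortestPath E ℓ Q s' t')
  (hvu : Precedes P v u) (huw : Precedes P u w) (hvw : Precedes Q v w) (hu : u ∈ Q)
include hP hQ hvu huw hvw hu

theorem IsShortestPath.precedes_left_of_between (huv : u ≠ v) : Precedes Q v u := by
  refine (Precedes.total hvw.1 hu).resolve_right fun huv' => ?_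
  have hloop := (hvu.isWalkFrom_subpath hP.1.1.2.2).pathWeight_add_pos hG
    (huv'.isWalkFrom_subpath hQ.1.1.2.2) huv.symm
  have hP_split := pathWeight_subpath (ℓ := ℓ) hvu huw
  have hQ_split := pathWeight_subpath (ℓ := ℓ) huv' hvw
  have hvw_eq := hP.pathWeight_subpath_eq hG hQ (hvu.trans huw) hvw
  have huw_eq := hP.pathWeight_subpath_eq hG hQ huw (huv'.trans hvw)
  linarith

theorem IsShortestPath.precedes_right_of_between (huw_ne : u ≠ w) : Precedes Q u w := by
  refine (Precedes.total hu hvw.2.1).resolve_right fun hwu => ?_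
  have hloop := (huw.isWalkFrom_subpath hP.1.1.2.2).pathWeight_add_pos hG
    (hwu.isWalkFrom_subpath hQ.1.1.2.2) huw_ne
  have hP_split := pathWeight_subpath (ℓ := ℓ) hvu huw
  have hQ_split := pathWeight_subpath (ℓ := ℓ) hvw hwu
  have hvw_eq := hP.pathWeight_subpath_eq hG hQ (hvu.trans huw) hvw
  have hvu_eq := hP.pathWeight_subpath_eq hG hQ hvu (hvw.trans hwu)
  linarith

end ShortestPaths

/-- Let `(P1, P2) ∈ Π(s1, t1) × Π(s2, t2)` and let `v, w` be
vertices such that `v` precedes `w` on both paths. Then every internal vertex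
of `P1[v, w]` lying on `P2` is contained in `P2[v, w]`. -/
theorem internal_vertex_of_subpath_mem_subpath
    (hG : NoNonposCycle E ℓ) (s1 t1 s2 t2 v w : V) (P1 P2 : List V)
    (h1 : IsShortestPath E ℓ P1 s1 t1) (h2 : IsShortestPath E ℓ P2 s2 t2)
    (hv1 : Precedes P1 v w) (hv2 : Precedes P2 v w) :
    ∀ u, Internal (subpath P1 v w) u → u ∈ P2 → u ∈ subpath P2 v w := by
  rintro u ⟨hu1, hv, hw⟩ hu2
  have huv : u ≠ v := by rintro rfl; exact hv (head?_subpath hv1.1 hv1.2.2)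
  have huw : u ≠ w := by rintro rfl; exact hw (getLast?_subpath hv1.2.1 hv1.2.2)
  obtain ⟨hvu, huw'⟩ := (mem_subpath_iff h1.1.1.2.1 hv1.2.1).1 hu1
  exact (mem_subpath_iff h2.1.1.2.1 hv2.2.1).2
    ⟨h1.precedes_left_of_between hG h2 hvu huw' hv2 hu2 huv,
      h1.precedes_right_of_between hG h2 hvu huw' hv2 hu2 huw⟩

end DSP
end

section
/- Let (x1, y1) and (x2, y2) be pairs of vertices of G with (x1, y1) ≠ (x2, y2) as ordered pairs. Then the polynomial F_disj(x1, y1, x2, y2) is nonzero if and only if there exists a pair (P1, P2) ∈ Π(x1, y1) × Π(x2, y2) of internally vertex-disjoint shortest paths; in particular, distinct internally vertex-disjoint pairs (P1, P2) contribute distinct monomials f(P1)f(P2). -/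
/-!
The monomial `f(P1) f(P2)` records the multiset of edges of `P1` and `P2`, hence their edge
union `U`. If `P1`, `P2` are internally disjoint, a vertex on both is an endpoint of both, and
the last vertex of a path has no outgoing edge on it; so in `U` only a common start `x1 = x2` can
have two outgoing edges. Any path along `U` from `x1` is therefore determined by its first edge,
and a path from `x1` to `y1` cannot start along the first edge of `P2` when `x1 = x2`, since that
leads to `y2 ≠ y1`. Hence distinct disjoint pairs give distinct monomials, each with coefficient
`1` in `F_disj`, which is then nonzero as soon as one disjoint pair exists.
-/

open scoped BigOperators

namespace List

variable {α : Type*}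

theorem eq_of_prefix_of_getLast?_eq {p q : List α} (hpq : p <+: q) (hq : q.Nodup)
    (h : p.getLast? = q.getLast?) : p = q := by
  obtain ⟨_ | ⟨a, r⟩, rfl⟩ := hpq
  · exact (append_nil p).symm
  · rw [getLast?_append_of_ne_nil _ (cons_ne_nil a r),
      getLast?_eq_some_getLast (cons_ne_nil a r)] at h
    exact absurd (getLast_mem _) (disjoint_of_nodup_append hq (mem_of_mem_getLast? h))

theorem eq_of_prefix_or_prefix {p q : List α} (h : p <+: q ∨ q <+: p) (hp : p.Nodup)
    (hq : q.Nodup) (hl : p.getLast? = q.getLast?) : p = q :=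
  h.elim (eq_of_prefix_of_getLast?_eq · hq hl)
    fun h => (eq_of_prefix_of_getLast?_eq h hp hl.symm).symm

variable (α) in
theorem finite_setOf_nodup [Finite α] : {l : List α | l.Nodup}.Finite := by
  have := Fintype.ofFinite α
  exact (finite_length_le α (Fintype.card α)).subset fun _ hp => hp.length_le_card

end List

namespace MvPolynomial

theorem finsum_mem_monomial_one_ne_zero {R σ ι : Type*} [CommSemiring R]
    [Nontrivial R] {S : Set ι} (hS : S.Finite) (hS' : S.Nonempty) {m : ι → σ →₀ ℕ}
    (hm : S.InjOn fun i => monomial (m i) (1 : R)) :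
    ∑ᶠ i ∈ S, monomial (m i) (1 : R) ≠ 0 := by
  classical
  obtain ⟨i, hi⟩ := hS'
  rw [finsum_mem_eq_finite_toFinset_sum _ hS]
  intro h
  have hcoeff := congrArg (coeff (m i)) h
  rw [coeff_sum, coeff_zero,
    Finset.sum_eq_single_of_mem i (hS.mem_toFinset.2 hi), coeff_monomial,
    if_pos rfl] at hcoeff
  · exact one_ne_zero hcoeff
  · intro j hj hji
    rw [coeff_monomial, if_neg]
    exact fun hmj => hji (hm (hS.mem_toFinset.1 hj) hi (by simp only [hmj]))

end MvPolynomial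

namespace DSP

variable {V : Type*}

section PathEdges

lemma pathEdges_cons_cons (x y : V) (t : List V) :
    pathEdges (x :: y :: t) = (x, y) :: pathEdges (y :: t) := rfl

lemma fst_mem_of_mem_pathEdges {p : List V} {u v : V} (h : (u, v) ∈ pathEdges p) : u ∈ p :=
  (List.of_mem_zip h).1

lemma snd_eq_of_mem_pathEdges {u v w : V} :
    ∀ {p : List V}, p.Nodup → (u, v) ∈ pathEdges p → (u, w) ∈ pathEdges p → v = w
  | [], _, hv, _ | [_], _, hv, _ => by simp [pathEdges] at hv
  | x :: y :: t, hp, hv, hw => by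
    rw [pathEdges_cons_cons, List.mem_cons, Prod.mk.injEq] at hv hw
    have hx := (List.nodup_cons.1 hp).1
    rcases hv with ⟨rfl, rfl⟩ | hv <;> rcases hw with ⟨hu, rfl⟩ | hw
    · rfl
    · exact absurd (fst_mem_of_mem_pathEdges hw) hx
    · exact absurd (hu ▸ fst_mem_of_mem_pathEdges hv) hx
    · exact snd_eq_of_mem_pathEdges (List.nodup_cons.1 hp).2 hv hw

lemma fst_ne_last_of_mem_pathEdges {u v y : V} :
    ∀ {p : List V}, p.Nodup → p.getLast? = some y → (u, v) ∈ pathEdges p → u ≠ y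
  | [], _, _, h | [_], _, _, h => by simp [pathEdges] at h
  | x :: x' :: t, hp, hl, h => by
    rw [List.getLast?_cons_cons] at hl
    rw [pathEdges_cons_cons, List.mem_cons, Prod.mk.injEq] at h
    rcases h with ⟨rfl, -⟩ | h
    · rintro rfl
      exact (List.nodup_cons.1 hp).1 (List.mem_of_mem_getLast? hl)
    · exact fst_ne_last_of_mem_pathEdges (List.nodup_cons.1 hp).2 hl h

lemma prefix_or_prefix_of_forall_mem_pathEdges {R : Set (V × V)}
    (hR : ∀ u v w, (u, v) ∈ R → (u, w) ∈ R → v = w) :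
    ∀ {p q : List V}, p.head? = q.head? → (∀ e ∈ pathEdges p, e ∈ R) →
      (∀ e ∈ pathEdges q, e ∈ R) → p <+: q ∨ q <+: p
  | [], _, _, _, _ => Or.inl List.nil_prefix
  | _ :: _, [], _, _, _ => Or.inr List.nil_prefix
  | [x], _ :: t, h, _, _ => Or.inl ⟨t, by simp_all⟩
  | x :: y :: s, [x'], h, _, _ => Or.inr ⟨y :: s, by simp_all⟩
  | x :: y :: s, x' :: y' :: t, h, hp, hq => by
    obtain rfl : x = x' := by simpa using h
    rw [pathEdges_cons_cons] at hp hq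
    obtain rfl : y = y' := hR x y y' (hp _ List.mem_cons_self) (hq _ List.mem_cons_self)
    simpa only [List.cons_prefix_cons, true_and] using
      prefix_or_prefix_of_forall_mem_pathEdges hR (p := y :: s) (q := y :: t) rfl
        (fun e he => hp e (List.mem_cons_of_mem _ he))
        (fun e he => hq e (List.mem_cons_of_mem _ he))

end PathEdges

section PathPairs

variable {E : V → V → Prop} {p p1 p2 p1' p2' : List V} {x y x1 y1 x2 y2 : V}

lemma IsPathFrom.nodup (hp : IsPathFrom E p x y) : p.Nodup := hp.1.2.1

lemma IsPathFrom.getLast_mem (hp : IsPathFrom E p x y) : y ∈ p :=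
  List.mem_of_mem_getLast? hp.2.2

lemma IsPathFrom.eq_singleton (hp : IsPathFrom E p x x) : p = [x] := by
  obtain ⟨⟨-, hnd, -⟩, hh, hl⟩ := hp
  match p, hnd, hh, hl with
  | [_], _, hh, _ => simpa using hh
  | _ :: _ :: _, hnd, hh, hl =>
    rw [List.getLast?_cons_cons] at hl
    obtain rfl := Option.some.inj hh
    exact absurd (List.mem_of_mem_getLast? hl) (List.nodup_cons.1 hnd).1

lemma IsPathFrom.exists_mem_pathEdges (hp : IsPathFrom E p x y) (hxy : x ≠ y) :
    ∃ a, (x, a) ∈ pathEdges p := by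
  obtain ⟨-, hh, hl⟩ := hp
  match p, hh, hl with
  | [_], hh, hl => exact absurd (Option.some.inj (hh.symm.trans hl)) hxy
  | _ :: a :: _, hh, _ =>
    obtain rfl := Option.some.inj hh
    exact ⟨a, List.mem_cons_self⟩

lemma InternallyDisjoint.symm (hd : InternallyDisjoint p1 x1 y1 p2 x2 y2) :
    InternallyDisjoint p2 x2 y2 p1 x1 y1 :=
  fun u h2 h1 => (hd u h1 h2).symm

lemma InternallyDisjoint.eq_endpoints_of_mem (hd : InternallyDisjoint p1 x1 y1 p2 x2 y2) {u : V}
    (h1 : u ∈ p1) (h2 : u ∈ p2) : (u = x1 ∨ u = y1) ∧ (u = x2 ∨ u = y2) := by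
  simpa using hd u h1 h2

variable (hd : InternallyDisjoint p1 x1 y1 p2 x2 y2) (hp1 : IsPathFrom E p1 x1 y1)
  (hp2 : IsPathFrom E p2 x2 y2)
include hd hp1 hp2

lemma InternallyDisjoint.fst_eq_of_mem_pathEdges {u v w : V} (h1 : (u, v) ∈ pathEdges p1)
    (h2 : (u, w) ∈ pathEdges p2) : u = x1 ∧ u = x2 := by
  obtain ⟨hu1, hu2⟩ :=
    hd.eq_endpoints_of_mem (fst_mem_of_mem_pathEdges h1) (fst_mem_of_mem_pathEdges h2)
  exact ⟨hu1.resolve_right (fst_ne_last_of_mem_pathEdges hp1.nodup hp1.2.2 h1),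
    hu2.resolve_right (fst_ne_last_of_mem_pathEdges hp2.nodup hp2.2.2 h2)⟩

lemma InternallyDisjoint.snd_eq_of_mem_append {u v w : V}
    (hv : (u, v) ∈ pathEdges p1 ++ pathEdges p2) (hw : (u, w) ∈ pathEdges p1 ++ pathEdges p2)
    (hu : u ≠ x1) : v = w := by
  rw [List.mem_append] at hv hw
  rcases hv with hv | hv <;> rcases hw with hw | hw
  · exact snd_eq_of_mem_pathEdges hp1.nodup hv hw
  · exact absurd (hd.fst_eq_of_mem_pathEdges hp1 hp2 hv hw).1 hu
  · exact absurd (hd.fst_eq_of_mem_pathEdges hp1 hp2 hw hv).1 hu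
  · exact snd_eq_of_mem_pathEdges hp2.nodup hv hw

lemma InternallyDisjoint.prefix_or_prefix {q q' : List V} {y y' c : V}
    (hq : IsPathFrom E q x1 y) (hq' : IsPathFrom E q' x1 y')
    (hc : (x1, c) ∈ pathEdges q) (hc' : (x1, c) ∈ pathEdges q')
    (hqU : ∀ e ∈ pathEdges q, e ∈ pathEdges p1 ++ pathEdges p2)
    (hq'U : ∀ e ∈ pathEdges q', e ∈ pathEdges p1 ++ pathEdges p2) :
    q <+: q' ∨ q' <+: q := by
  refine prefix_or_prefix_of_forall_mem_pathEdges
    (R := {e | e ∈ pathEdges p1 ++ pathEdges p2 ∧ (e.1 = x1 → e.2 = c)}) ?_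
    (hq.2.1.trans hq'.2.1.symm) (fun ⟨u, v⟩ he => ⟨hqU _ he, ?_⟩)
    (fun ⟨u, v⟩ he => ⟨hq'U _ he, ?_⟩)
  · rintro u v w ⟨hv, hv'⟩ ⟨hw, hw'⟩
    by_cases hu : u = x1
    · exact (hv' hu).trans (hw' hu).symm
    · exact hd.snd_eq_of_mem_append hp1 hp2 hv hw hu
  · rintro (rfl : u = x1)
    exact snd_eq_of_mem_pathEdges hq.nodup he hc
  · rintro (rfl : u = x1)
    exact snd_eq_of_mem_pathEdges hq'.nodup he hc'

theorem InternallyDisjoint.left_eq_of_perm (hne : (x1, y1) ≠ (x2, y2))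
    (hp1' : IsPathFrom E p1' x1 y1) (hp2' : IsPathFrom E p2' x2 y2)
    (hd' : InternallyDisjoint p1' x1 y1 p2' x2 y2)
    (hperm : (pathEdges p1 ++ pathEdges p2).Perm (pathEdges p1' ++ pathEdges p2')) :
    p1 = p1' := by
  rcases eq_or_ne x1 y1 with rfl | hxy
  · rw [hp1.eq_singleton, hp1'.eq_singleton]
  have hU1 : ∀ e ∈ pathEdges p1, e ∈ pathEdges p1 ++ pathEdges p2 :=
    fun e he => List.mem_append_left _ he
  have hU1' : ∀ e ∈ pathEdges p1', e ∈ pathEdges p1 ++ pathEdges p2 :=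
    fun e he => hperm.mem_iff.2 (List.mem_append_left _ he)
  obtain ⟨a, ha⟩ := hp1.exists_mem_pathEdges hxy
  obtain ⟨a', ha'⟩ := hp1'.exists_mem_pathEdges hxy
  obtain rfl | haa := eq_or_ne a' a
  · exact List.eq_of_prefix_or_prefix (hd.prefix_or_prefix hp1 hp2 hp1 hp1' ha ha' hU1 hU1')
      hp1.nodup hp1'.nodup (hp1.2.2.trans hp1'.2.2.symm)
  -- `p1'` leaves `x1` along the first edge of `p2`, so it follows `p2` and cannot end at `y1`.
  have ha'2 : (x1, a') ∈ pathEdges p2 := (List.mem_append.1 (hU1' _ ha')).resolve_left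
    fun h => haa (snd_eq_of_mem_pathEdges hp1.nodup h ha)
  obtain rfl : x1 = x2 := (hd.fst_eq_of_mem_pathEdges hp1 hp2 ha ha'2).2
  have hyy : y1 ≠ y2 := fun h => hne (h ▸ rfl)
  have hxy2 : x1 ≠ y2 := fst_ne_last_of_mem_pathEdges hp2.nodup hp2.2.2 ha'2
  exfalso
  rcases hd.prefix_or_prefix hp1 hp2 hp2 hp1' ha'2 ha' (fun e he => List.mem_append_right _ he)
    hU1' with h | h
  · obtain ⟨h | h, -⟩ := hd'.eq_endpoints_of_mem (h.subset hp2.getLast_mem) hp2'.getLast_mem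
    exacts [hxy2 h.symm, hyy h.symm]
  · obtain ⟨-, h | h⟩ := hd.eq_endpoints_of_mem hp1.getLast_mem (h.subset hp1'.getLast_mem)
    exacts [hxy h.symm, hyy h]

end PathPairs

theorem eq_of_perm_pathEdges_append {E : V → V → Prop} {p1 p2 p1' p2' : List V}
    {x1 y1 x2 y2 : V} (hne : (x1, y1) ≠ (x2, y2))
    (hp1 : IsPathFrom E p1 x1 y1) (hp2 : IsPathFrom E p2 x2 y2)
    (hp1' : IsPathFrom E p1' x1 y1) (hp2' : IsPathFrom E p2' x2 y2)
    (hd : InternallyDisjoint p1 x1 y1 p2 x2 y2) (hd' : InternallyDisjoint p1' x1 y1 p2' x2 y2)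
    (hperm : (pathEdges p1 ++ pathEdges p2).Perm (pathEdges p1' ++ pathEdges p2')) :
    p1 = p1' ∧ p2 = p2' :=
  ⟨hd.left_eq_of_perm hp1 hp2 hne hp1' hp2' hd' hperm,
    hd.symm.left_eq_of_perm hp2 hp1 hne.symm hp2' hp1' hd'.symm
      (List.perm_append_comm.trans (hperm.trans List.perm_append_comm))⟩

section Monomials

open MvPolynomial

variable [DecidableEq V] (F : Type*) [Field F]

lemma pathMon_eq_monomial (p : List V) :
    pathMon F p = monomial (Multiset.toFinsupp (pathEdges p : Multiset (V × V))) 1 := by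
  rw [pathMon]
  induction pathEdges p with
  | nil => simp
  | cons e l ih =>
    rw [List.map_cons, List.prod_cons, ih, ← Multiset.cons_coe, ← Multiset.singleton_add,
      map_add, Multiset.toFinsupp_singleton, X, monomial_mul, one_mul]

lemma pathMon_mul_pathMon (p q : List V) :
    pathMon F p * pathMon F q =
      monomial (Multiset.toFinsupp (pathEdges p ++ pathEdges q : Multiset (V × V))) 1 := by
  rw [pathMon_eq_monomial, pathMon_eq_monomial, monomial_mul, one_mul, ← Multiset.coe_add,
    map_add]

lemma pathMon_mul_pathMon_eq_iff {p1 p2 q1 q2 : List V} :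
    pathMon F p1 * pathMon F p2 = pathMon F q1 * pathMon F q2 ↔
      (pathEdges p1 ++ pathEdges p2).Perm (pathEdges q1 ++ pathEdges q2) := by
  rw [pathMon_mul_pathMon, pathMon_mul_pathMon, (monomial_left_injective one_ne_zero).eq_iff,
    Multiset.toFinsupp.injective.eq_iff, Multiset.coe_eq_coe]

end Monomials

lemma disjPairs_finite [Finite V] (E : V → V → Prop) (ℓ : V → V → ℝ) (x1 y1 x2 y2 : V) :
    (disjPairs E ℓ x1 y1 x2 y2).Finite :=
  ((List.finite_setOf_nodup V).prod (List.finite_setOf_nodup V)).subset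
    fun _ hq => ⟨hq.1.1.nodup, hq.2.1.1.nodup⟩

variable [Fintype V] [DecidableEq V] (E : V → V → Prop) (ℓ : V → V → ℝ)

theorem Fdisj_ne_zero_iff_exists_disjoint
    (F : Type*) [Field F]
    (x1 y1 x2 y2 : V)
    (hne : (x1, y1) ≠ (x2, y2)) :
    (enumPoly2 F (disjPairs E ℓ x1 y1 x2 y2) ≠ 0 ↔
      (disjPairs E ℓ x1 y1 x2 y2).Nonempty) ∧
    Set.InjOn (fun q : List V × List V => pathMon F q.1 * pathMon F q.2)
      (disjPairs E ℓ x1 y1 x2 y2) := by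
  have hinj : Set.InjOn (fun q : List V × List V => pathMon F q.1 * pathMon F q.2)
      (disjPairs E ℓ x1 y1 x2 y2) := by
    rintro ⟨p1, p2⟩ ⟨hp1, hp2, hd⟩ ⟨p1', p2'⟩ ⟨hp1', hp2', hd'⟩ h
    exact Prod.ext_iff.2 <| eq_of_perm_pathEdges_append hne hp1.1 hp2.1 hp1'.1 hp2'.1 hd hd'
      ((pathMon_mul_pathMon_eq_iff F).1 h)
  refine ⟨⟨fun h => Set.nonempty_iff_ne_empty.2 fun hS => h ?_, fun hS => ?_⟩, hinj⟩
  · rw [enumPoly2, hS, finsum_mem_empty]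
  · simp only [enumPoly2, pathMon_mul_pathMon] at hinj ⊢
    exact MvPolynomial.finsum_mem_monomial_one_ne_zero (disjPairs_finite E ℓ _ _ _ _) hS hinj

end DSP
end

section
/- For any vertices x1, y1, x2, y2 of G, the following polynomial identity holds: F_disj(x1, y1, x2, y2) = F(x1, y1) · F(x2, y2) − Σ_{v ∈ V ∖ ({x1, y1} ∩ {x2, y2})} D_v(x1, y1, x2, y2). -/
/-!
Write `A = {x1, y1} ∩ {x2, y2}`. A pair `(P1, P2) ∈ Π(x1, y1) × Π(x2, y2)` that is not
internally disjoint lies in `D_v` for exactly one `v ∉ A`: the first vertex of `P1` outside `A`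
that lies on `P2`. Indeed, any vertex `u ≠ v` of `P1[x1, v]` on `P2` must then be `x1` and an
endpoint of `P2`, and being on the right side of `v` along `P2` it is `x2` or `y2` accordingly;
conversely, two such vertices would force the earlier one into `A`. Hence
`Π(x1, y1) × Π(x2, y2)` is the disjoint union of the internally disjoint pairs and the sets
`D_v`, `v ∉ A`, so `F(x1, y1) F(x2, y2) = F_disj + Σ_v D_v`.
-/

open scoped BigOperators

namespace DSP

variable {V : Type*} [Fintype V] [DecidableEq V]

variable (E : V → V → Prop) (ℓ : V → V → ℝ)

theorem _root_.List.Nodup.mem_drop_iff_le_idxOf {α : Type*} [DecidableEq α] {l : List α}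
    (hl : l.Nodup) {n : ℕ} {a : α} : a ∈ l.drop n ↔ a ∈ l ∧ n ≤ l.idxOf a := by
  have hdisj : (l.take n).Disjoint (l.drop n) :=
    List.disjoint_of_nodup_append (by rwa [List.take_append_drop])
  constructor
  · intro h
    have ha := List.mem_of_mem_drop h
    exact ⟨ha, not_lt.1 fun hlt => hdisj ((List.mem_take_iff_idxOf_lt ha).2 hlt) h⟩
  · rintro ⟨ha, hle⟩
    have ha' := ha
    rw [← List.take_append_drop n l, List.mem_append] at ha'
    exact ha'.resolve_left fun ht => (not_lt.2 hle) ((List.mem_take_iff_idxOf_lt ha).1 ht)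

theorem _root_.List.idxOf_eq_zero_of_head?_eq {α : Type*} [DecidableEq α] {l : List α} {a : α}
    (h : l.head? = some a) : l.idxOf a = 0 :=
  (List.idxOf_eq_zero_iff_eq_nil_or_head_eq a).2 (Or.inr h)

theorem _root_.List.Nodup.idxOf_add_one_eq_length_of_getLast?_eq {α : Type*} [DecidableEq α]
    {l : List α} (hl : l.Nodup) {a : α} (h : l.getLast? = some a) :
    l.idxOf a + 1 = l.length := by
  obtain ⟨l', rfl⟩ := List.getLast?_eq_some_iff.1 h
  have ha : a ∉ l' := fun ha => (List.nodup_append.1 hl).2.2 a ha a (by simp) rfl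
  simp [List.idxOf_append_of_notMem ha]

section Paths

omit [Fintype V]

variable {E : V → V → Prop} {p : List V} {x y u v : V}

theorem mem_subpath_of_head?_eq (h : p.head? = some x) :
    u ∈ subpath p x v ↔ u ∈ p ∧ p.idxOf u ≤ p.idxOf v := by
  rw [subpath, List.idxOf_eq_zero_of_head?_eq h, List.drop_zero]
  refine ⟨fun hu => ?_,
    fun ⟨hu, hle⟩ => (List.mem_take_iff_idxOf_lt hu).2 (Nat.lt_succ_of_le hle)⟩
  have hu' := List.mem_of_mem_take hu
  exact ⟨hu', Nat.le_of_lt_succ ((List.mem_take_iff_idxOf_lt hu').1 hu)⟩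

theorem mem_subpath_of_getLast?_eq (hp : p.Nodup) (h : p.getLast? = some y) :
    u ∈ subpath p v y ↔ u ∈ p ∧ p.idxOf v ≤ p.idxOf u := by
  rw [subpath, hp.idxOf_add_one_eq_length_of_getLast?_eq h, List.take_length,
    hp.mem_drop_iff_le_idxOf]

namespace IsPathFrom

theorem mem_subpath_head_iff (hp : IsPathFrom E p x y) :
    u ∈ subpath p x v ↔ u ∈ p ∧ p.idxOf u ≤ p.idxOf v :=
  mem_subpath_of_head?_eq hp.2.1

theorem mem_subpath_last_iff (hp : IsPathFrom E p x y) :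
    u ∈ subpath p v y ↔ u ∈ p ∧ p.idxOf v ≤ p.idxOf u :=
  mem_subpath_of_getLast?_eq hp.1.2.1 hp.2.2

theorem mem_subpath_head_or_mem_subpath_last (hp : IsPathFrom E p x y) (hu : u ∈ p) (v : V) :
    u ∈ subpath p x v ∨ u ∈ subpath p v y := by
  rw [hp.mem_subpath_head_iff, hp.mem_subpath_last_iff]
  exact (le_total _ _).imp (⟨hu, ·⟩) (⟨hu, ·⟩)

theorem idxOf_le_idxOf_last (hp : IsPathFrom E p x y) (hu : u ∈ p) : p.idxOf u ≤ p.idxOf y := by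
  have := hp.1.2.1.idxOf_add_one_eq_length_of_getLast?_eq hp.2.2
  have := List.idxOf_lt_length_of_mem hu
  omega

theorem eq_head_of_mem_subpath_head (hp : IsPathFrom E p x y) (hv : v ∈ p)
    (hu : u ∈ subpath p x v) (hxy : u = x ∨ u = y) (huv : u ≠ v) : u = x := by
  refine hxy.resolve_right fun huy => huv ?_
  subst huy
  have hle := (hp.mem_subpath_head_iff.1 hu).2
  exact (List.idxOf_inj hv).1 (le_antisymm (hp.idxOf_le_idxOf_last hv) hle) |>.symm

theorem eq_last_of_mem_subpath_last (hp : IsPathFrom E p x y) (hv : v ∈ p)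
    (hu : u ∈ subpath p v y) (hxy : u = x ∨ u = y) (huv : u ≠ v) : u = y := by
  refine hxy.resolve_left fun hux => huv ?_
  subst hux
  have hle := (hp.mem_subpath_last_iff.1 hu).2
  have h0 := List.idxOf_eq_zero_of_head?_eq hp.2.1
  exact ((List.idxOf_inj hv).1 (by omega)).symm

end IsPathFrom

/-- The condition on `(P1, P2)` defining `D_v`, apart from `P1` and `P2` being shortest paths. -/
def IsDvVertex (p1 : List V) (x1 : V) (p2 : List V) (x2 y2 v : V) : Prop :=
  v ∈ p1 ∧ v ∈ p2 ∧
    InternallyDisjoint (subpath p1 x1 v) x1 v (subpath p2 x2 v) x2 v ∧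
    InternallyDisjoint (subpath p1 x1 v) x1 v (subpath p2 v y2) v y2

variable {p1 p2 : List V} {x1 y1 x2 y2 w : V}

theorem IsDvVertex.not_internallyDisjoint (hv : IsDvVertex p1 x1 p2 x2 y2 v)
    (hvA : v ∉ ({x1, y1} ∩ {x2, y2} : Set V)) : ¬ InternallyDisjoint p1 x1 y1 p2 x2 y2 :=
  fun hd => hvA (hd v hv.1 hv.2.1)

theorem IsDvVertex.eq_of_idxOf_le (hp1 : IsPathFrom E p1 x1 y1) (hp2 : IsPathFrom E p2 x2 y2)
    (hw : IsDvVertex p1 x1 p2 x2 y2 w) (hv1 : v ∈ p1) (hv2 : v ∈ p2)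
    (hvA : v ∉ ({x1, y1} ∩ {x2, y2} : Set V)) (hle : p1.idxOf v ≤ p1.idxOf w) : v = w := by
  by_contra hne
  have hvw : v ∈ subpath p1 x1 w := hp1.mem_subpath_head_iff.2 ⟨hv1, hle⟩
  rcases hp2.mem_subpath_head_or_mem_subpath_last hv2 w with h | h
  · have hm := hw.2.2.1 v hvw h
    exact hvA ⟨Or.inl (hm.1.resolve_right hne), Or.inl (hm.2.resolve_right hne)⟩
  · have hm := hw.2.2.2 v hvw h
    exact hvA ⟨Or.inl (hm.1.resolve_right hne), Or.inr (hm.2.resolve_left hne)⟩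

theorem IsDvVertex.eq (hp1 : IsPathFrom E p1 x1 y1) (hp2 : IsPathFrom E p2 x2 y2)
    (hv : IsDvVertex p1 x1 p2 x2 y2 v) (hw : IsDvVertex p1 x1 p2 x2 y2 w)
    (hvA : v ∉ ({x1, y1} ∩ {x2, y2} : Set V)) (hwA : w ∉ ({x1, y1} ∩ {x2, y2} : Set V)) :
    v = w := by
  rcases le_total (p1.idxOf v) (p1.idxOf w) with hle | hle
  · exact hw.eq_of_idxOf_le hp1 hp2 hv.1 hv.2.1 hvA hle
  · exact (hv.eq_of_idxOf_le hp1 hp2 hw.1 hw.2.1 hwA hle).symm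

theorem exists_isDvVertex (hp1 : IsPathFrom E p1 x1 y1) (hp2 : IsPathFrom E p2 x2 y2)
    (hd : ¬ InternallyDisjoint p1 x1 y1 p2 x2 y2) :
    ∃ v ∉ ({x1, y1} ∩ {x2, y2} : Set V), IsDvVertex p1 x1 p2 x2 y2 v := by
  simp only [InternallyDisjoint, not_forall] at hd
  obtain ⟨u₀, hu₀1, hu₀2, hu₀A⟩ := hd
  obtain ⟨v, ⟨hv1, hv2, hvA⟩, hmin⟩ := Set.exists_min_image
    {u | u ∈ p1 ∧ u ∈ p2 ∧ u ∉ ({x1, y1} ∩ {x2, y2} : Set V)} p1.idxOf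
    (p1.finite_toSet.subset fun u hu => hu.1) ⟨u₀, hu₀1, hu₀2, hu₀A⟩
  have hbefore :
      ∀ u ∈ subpath p1 x1 v, u ∈ p2 → u ≠ v → u = x1 ∧ (u = x2 ∨ u = y2) := by
    intro u hu hu2 huv
    obtain ⟨hu1, hle⟩ := hp1.mem_subpath_head_iff.1 hu
    have huA : u ∈ ({x1, y1} ∩ {x2, y2} : Set V) := by
      by_contra huA
      exact huv ((List.idxOf_inj hu1).1 (le_antisymm hle (hmin u ⟨hu1, hu2, huA⟩)))
    exact ⟨hp1.eq_head_of_mem_subpath_head hv1 hu huA.1 huv, huA.2⟩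
  refine ⟨v, hvA, hv1, hv2, fun u hu h => ?_, fun u hu h => ?_⟩
  · by_cases huv : u = v
    · exact ⟨Or.inr huv, Or.inr huv⟩
    obtain ⟨rfl, hx2y2⟩ := hbefore u hu (hp2.mem_subpath_head_iff.1 h).1 huv
    exact ⟨Or.inl rfl, Or.inl (hp2.eq_head_of_mem_subpath_head hv2 h hx2y2 huv)⟩
  · by_cases huv : u = v
    · exact ⟨Or.inr huv, Or.inl huv⟩
    obtain ⟨rfl, hx2y2⟩ := hbefore u hu (hp2.mem_subpath_last_iff.1 h).1 huv
    exact ⟨Or.inl rfl, Or.inr (hp2.eq_last_of_mem_subpath_last hv2 h hx2y2 huv)⟩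

end Paths

section Polynomials

omit [Fintype V] [DecidableEq V]

variable (F : Type*) [Field F]

theorem enumPoly2_prod {P Q : Set (List V)} (hP : P.Finite) (hQ : Q.Finite) :
    enumPoly2 F (P ×ˢ Q) = enumPoly F P * enumPoly F Q := by
  rw [enumPoly2, enumPoly, enumPoly, finsum_mem_eq_finite_toFinset_sum _ hP,
    finsum_mem_eq_finite_toFinset_sum _ hQ, finsum_mem_eq_finite_toFinset_sum _ (hP.prod hQ),
    ← Set.Finite.toFinset_prod, Finset.sum_product, Finset.sum_mul_sum]

theorem enumPoly2_union {S T : Set (List V × List V)} (hST : Disjoint S T) (hS : S.Finite)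
    (hT : T.Finite) :
    enumPoly2 F (S ∪ T) = enumPoly2 F S + enumPoly2 F T :=
  finsum_mem_union hST hS hT

theorem enumPoly2_biUnion {ι : Type*} {I : Set ι} {S : ι → Set (List V × List V)}
    (hdisj : I.PairwiseDisjoint S) (hI : I.Finite) (hS : ∀ i ∈ I, (S i).Finite) :
    enumPoly2 F (⋃ i ∈ I, S i) = ∑ᶠ i ∈ I, enumPoly2 F (S i) :=
  finsum_mem_biUnion hdisj hI hS

end Polynomials

omit [DecidableEq V] in
theorem setOf_isShortestPath_finite (x y : V) : {p : List V | IsShortestPath E ℓ p x y}.Finite :=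
  (List.finite_length_le V (Fintype.card V)).subset fun _ hp => hp.1.1.2.1.length_le_card

section PairsOfShortestPaths

omit [Fintype V]

variable {x1 y1 x2 y2 : V}

theorem prod_setOf_isShortestPath_eq_union :
    {p | IsShortestPath E ℓ p x1 y1} ×ˢ {p | IsShortestPath E ℓ p x2 y2} =
      disjPairs E ℓ x1 y1 x2 y2 ∪
        ⋃ v ∈ ({x1, y1} ∩ {x2, y2} : Set V)ᶜ, DvPairs E ℓ v x1 y1 x2 y2 := by
  ext ⟨p1, p2⟩
  simp only [Set.mem_prod, Set.mem_union, Set.mem_iUnion, Set.mem_compl_iff, exists_prop]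
  refine ⟨fun ⟨h1, h2⟩ => ?_, ?_⟩
  · by_cases hd : InternallyDisjoint p1 x1 y1 p2 x2 y2
    · exact Or.inl ⟨h1, h2, hd⟩
    · obtain ⟨v, hvA, hv⟩ := exists_isDvVertex h1.1 h2.1 hd
      exact Or.inr ⟨v, hvA, h1, h2, hv⟩
  · rintro (⟨h1, h2, -⟩ | ⟨v, -, h1, h2, -⟩) <;> exact ⟨h1, h2⟩

theorem disjoint_disjPairs_biUnion_DvPairs :
    Disjoint (disjPairs E ℓ x1 y1 x2 y2)
      (⋃ v ∈ ({x1, y1} ∩ {x2, y2} : Set V)ᶜ, DvPairs E ℓ v x1 y1 x2 y2) :=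
  Set.disjoint_iUnion₂_right.2 fun _ hvA => Set.disjoint_left.2 fun _ hd hv =>
    IsDvVertex.not_internallyDisjoint hv.2.2 hvA hd.2.2

theorem pairwiseDisjoint_DvPairs :
    ({x1, y1} ∩ {x2, y2} : Set V)ᶜ.PairwiseDisjoint fun v => DvPairs E ℓ v x1 y1 x2 y2 :=
  fun _ hvA _ hwA hne => Set.disjoint_left.2 fun _ hv hw =>
    hne (IsDvVertex.eq hv.1.1 hv.2.1.1 hv.2.2 hw.2.2 hvA hwA)

end PairsOfShortestPaths

theorem Fdisj_eq_FF_sub_sum_Dv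
    (F : Type*) [Field F]
    (x1 y1 x2 y2 : V) :
    enumPoly2 F (disjPairs E ℓ x1 y1 x2 y2) =
      Fpoly F E ℓ x1 y1 * Fpoly F E ℓ x2 y2 -
        ∑ᶠ v ∈ (({x1, y1} ∩ {x2, y2} : Set V))ᶜ,
          enumPoly2 F (DvPairs E ℓ v x1 y1 x2 y2) := by
  have hP1 := setOf_isShortestPath_finite E ℓ x1 y1
  have hP2 := setOf_isShortestPath_finite E ℓ x2 y2
  have hDv : ∀ v, (DvPairs E ℓ v x1 y1 x2 y2).Finite :=
    fun _ => (hP1.prod hP2).subset fun _ hq => ⟨hq.1, hq.2.1⟩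
  have hdisjPairs : (disjPairs E ℓ x1 y1 x2 y2).Finite :=
    (hP1.prod hP2).subset fun _ hq => ⟨hq.1, hq.2.1⟩
  rw [eq_sub_iff_add_eq, Fpoly, Fpoly, ← enumPoly2_prod F hP1 hP2,
    prod_setOf_isShortestPath_eq_union,
    enumPoly2_union F (disjoint_disjPairs_biUnion_DvPairs E ℓ) hdisjPairs
      ((Set.toFinite _).biUnion fun v _ => hDv v),
    enumPoly2_biUnion F (pairwiseDisjoint_DvPairs E ℓ) (Set.toFinite _) fun v _ => hDv v]

end DSP
end
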